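/- arXiv:1710.03471 — 4 statements merged into one kernel-verified Lean document; each statement's English description precedes it below -/
import Mathlib

section
/- Let b : ℝⁿ → ℝⁿ be measurable and let φ̄ ∈ H¹([0,1]; ℝⁿ) satisfy ‖φ̄'‖_{L²(0,1)} > 0 and ‖b(φ̄)‖_{L²(0,1)} > 0, so that T̂(φ̄) ∈ (0, ∞). Then the function T ↦ S(T, φ̄) on (0, ∞) attains its infimum exactly at T = T̂(φ̄), and inf_{T > 0} S(T, φ̄) = S(T̂(φ̄), φ̄) = ‖φ̄'‖_{L²(0,1)} ‖b(φ̄)‖_{L²(0,1)} − ∫₀¹ ⟨φ̄'(s), b(φ̄(s))⟩ ds. -/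
open MeasureTheory Filter intervalIntegral
open scoped RealInnerProductSpace Topology

noncomputable section

/-- `φ` is an `H¹` path on `[0,T]` with (weak) derivative `dφ`:
`dφ` is square integrable on `(0,T)` and `φ` is the primitive of `dφ`. -/
def IsH1Path {n : ℕ} (T : ℝ) (φ dφ : ℝ → EuclideanSpace ℝ (Fin n)) : Prop :=
  MeasureTheory.MemLp dφ 2 (MeasureTheory.volume.restrict (Set.Ioc (0:ℝ) T)) ∧
  ∀ t ∈ Set.Icc (0:ℝ) T, φ t = φ 0 + ∫ s in (0:ℝ)..t, dφ s

/-- The Freidlin–Wentzell action functional `S_T(φ) = (1/2)∫₀ᵀ ‖φ' - b(φ)‖² dt`. -/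
def action {n : ℕ} (b : EuclideanSpace ℝ (Fin n) → EuclideanSpace ℝ (Fin n))
    (T : ℝ) (φ dφ : ℝ → EuclideanSpace ℝ (Fin n)) : ℝ :=
  (1/2) * ∫ t in (0:ℝ)..T, ‖dφ t - b (φ t)‖^2

/-- The `L²(0,T)` norm of an `ℝⁿ`-valued function. -/
def L2norm {n : ℕ} (T : ℝ) (f : ℝ → EuclideanSpace ℝ (Fin n)) : ℝ :=
  Real.sqrt (∫ t in (0:ℝ)..T, ‖f t‖^2)

/-- The admissible set `A_T` of `H¹` transition paths from `x₁` to `x₂` on `[0,T]`. -/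
def Adm {n : ℕ} (T : ℝ) (x₁ x₂ : EuclideanSpace ℝ (Fin n))
    (φ dφ : ℝ → EuclideanSpace ℝ (Fin n)) : Prop :=
  IsH1Path T φ dφ ∧ φ 0 = x₁ ∧ φ T = x₂

/-- The rescaled action `S(T, φ̄) = (T/2)∫₀¹ ‖T⁻¹ φ̄' - b(φ̄)‖² ds` on `[0,1]`. -/
def Ssc {n : ℕ} (b : EuclideanSpace ℝ (Fin n) → EuclideanSpace ℝ (Fin n))
    (T : ℝ) (φ dφ : ℝ → EuclideanSpace ℝ (Fin n)) : ℝ :=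
  (T/2) * ∫ s in (0:ℝ)..1, ‖T⁻¹ • dφ s - b (φ s)‖^2

/-- The optimal linear time scaling `T̂(φ̄) = ‖φ̄'‖_{L²} / ‖b(φ̄)‖_{L²}`. -/
def That {n : ℕ} (b : EuclideanSpace ℝ (Fin n) → EuclideanSpace ℝ (Fin n))
    (φ dφ : ℝ → EuclideanSpace ℝ (Fin n)) : ℝ :=
  L2norm 1 dφ / L2norm 1 (fun s => b (φ s))

/-- The reformulated action `Ŝ(φ̄) = ‖φ̄'‖_{L²} ‖b(φ̄)‖_{L²} − ∫₀¹⟨φ̄', b(φ̄)⟩ ds`. -/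
def Shat {n : ℕ} (b : EuclideanSpace ℝ (Fin n) → EuclideanSpace ℝ (Fin n))
    (φ dφ : ℝ → EuclideanSpace ℝ (Fin n)) : ℝ :=
  L2norm 1 dφ * L2norm 1 (fun s => b (φ s)) - ∫ s in (0:ℝ)..1, ⟪dφ s, b (φ s)⟫

/-- `a` and `c` are adjacent nodes of the partition (finite node set) `P`. -/
def Adjacent (P : Finset ℝ) (a c : ℝ) : Prop :=
  a ∈ P ∧ c ∈ P ∧ a < c ∧ ∀ p ∈ P, p ≤ a ∨ c ≤ p

/-- `φ` is affine on each element of the partition `P`. -/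
def PiecewiseAffineOn {n : ℕ} (P : Finset ℝ) (φ : ℝ → EuclideanSpace ℝ (Fin n)) : Prop :=
  ∀ a c, Adjacent P a c → ∀ t ∈ Set.Icc a c,
    φ t = φ a + ((t - a) / (c - a)) • (φ c - φ a)

/-- `P` is a partition (node set) of `[0,T]`. -/
def IsPartition (T : ℝ) (P : Finset ℝ) : Prop :=
  (0:ℝ) ∈ P ∧ T ∈ P ∧ ∀ p ∈ P, p ∈ Set.Icc (0:ℝ) T

/-- Weak convergence `φ_k ⇀ φ` in `H¹((0,T); ℝⁿ)`, expressed by testing the pair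
`(φ_k, φ_k')` against arbitrary pairs of `L²` functions. -/
def WeakH1Tendsto {n : ℕ} (T : ℝ) (φk dφk : ℕ → ℝ → EuclideanSpace ℝ (Fin n))
    (φ dφ : ℝ → EuclideanSpace ℝ (Fin n)) : Prop :=
  ∀ g₀ g₁ : ℝ → EuclideanSpace ℝ (Fin n),
    MeasureTheory.MemLp g₀ 2 (MeasureTheory.volume.restrict (Set.Ioc (0:ℝ) T)) →
    MeasureTheory.MemLp g₁ 2 (MeasureTheory.volume.restrict (Set.Ioc (0:ℝ) T)) →
    Tendsto (fun k => (∫ t in (0:ℝ)..T, ⟪φk k t, g₀ t⟫) + ∫ t in (0:ℝ)..T, ⟪dφk k t, g₁ t⟫)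
      atTop (𝓝 ((∫ t in (0:ℝ)..T, ⟪φ t, g₀ t⟫) + ∫ t in (0:ℝ)..T, ⟪dφ t, g₁ t⟫))

/-- Values of `S_T` over the admissible set `A_T` (Problem I). -/
def probISet {n : ℕ} (b : EuclideanSpace ℝ (Fin n) → EuclideanSpace ℝ (Fin n))
    (T : ℝ) (x₁ x₂ : EuclideanSpace ℝ (Fin n)) : Set ℝ :=
  {v | ∃ φ dφ, Adm T x₁ x₂ φ dφ ∧ v = action b T φ dφ}

/-- Values of `S_T` over all `T > 0` and `φ ∈ A_T` (Problem II); its infimum is the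
quasi-potential `V(x₁,x₂)`. -/
def probIISet {n : ℕ} (b : EuclideanSpace ℝ (Fin n) → EuclideanSpace ℝ (Fin n))
    (x₁ x₂ : EuclideanSpace ℝ (Fin n)) : Set ℝ :=
  {v | ∃ T, 0 < T ∧ ∃ φ dφ, Adm T x₁ x₂ φ dφ ∧ v = action b T φ dφ}

/-- Values of `Ŝ` over the rescaled admissible set `A₁`. -/
def shatSet {n : ℕ} (b : EuclideanSpace ℝ (Fin n) → EuclideanSpace ℝ (Fin n))
    (x₁ x₂ : EuclideanSpace ℝ (Fin n)) : Set ℝ :=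
  {v | ∃ φ dφ, Adm 1 x₁ x₂ φ dφ ∧ v = Shat b φ dφ}

/-- Membership in the finite element space `B_h` of continuous piecewise affine
admissible paths associated with the partition `P`. -/
def BmemP {n : ℕ} (P : Finset ℝ) (T : ℝ) (x₁ x₂ : EuclideanSpace ℝ (Fin n))
    (φ dφ : ℝ → EuclideanSpace ℝ (Fin n)) : Prop :=
  Adm T x₁ x₂ φ dφ ∧ PiecewiseAffineOn P φ

/-- Values of `S_T` over the finite element space `B_h` (the discretized Problem I). -/
def discSet {n : ℕ} (b : EuclideanSpace ℝ (Fin n) → EuclideanSpace ℝ (Fin n))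
    (P : Finset ℝ) (T : ℝ) (x₁ x₂ : EuclideanSpace ℝ (Fin n)) : Set ℝ :=
  {v | ∃ φ dφ, BmemP P T x₁ x₂ φ dφ ∧ v = action b T φ dφ}

/-- Values of `Ŝ` over the finite element space `B̄_h` (the discretized Problem II). -/
def discShatSet {n : ℕ} (b : EuclideanSpace ℝ (Fin n) → EuclideanSpace ℝ (Fin n))
    (P : Finset ℝ) (x₁ x₂ : EuclideanSpace ℝ (Fin n)) : Set ℝ :=
  {v | ∃ φ dφ, BmemP P 1 x₁ x₂ φ dφ ∧ v = Shat b φ dφ}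

namespace MeasureTheory

variable {α E : Type*} [MeasurableSpace α] {μ : Measure α}
  [NormedAddCommGroup E] [InnerProductSpace ℝ E] {f g : α → E}

theorem MemLp.integrable_inner (hf : MemLp f 2 μ) (hg : MemLp g 2 μ) :
    Integrable (fun x => ⟪f x, g x⟫) μ :=
  (L2.integrable_inner (𝕜 := ℝ) (hf.toLp f) (hg.toLp g)).congr <| by
    filter_upwards [hf.coeFn_toLp, hg.coeFn_toLp] with x hfx hgx
    rw [hfx, hgx]

theorem integral_norm_smul_sub_sq (hf : MemLp f 2 μ) (hg : MemLp g 2 μ) (c : ℝ) :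
    ∫ x, ‖c • f x - g x‖ ^ 2 ∂μ =
      c ^ 2 * ∫ x, ‖f x‖ ^ 2 ∂μ - 2 * c * ∫ x, ⟪f x, g x⟫ ∂μ + ∫ x, ‖g x‖ ^ 2 ∂μ := by
  have hexpand : ∀ x, ‖c • f x - g x‖ ^ 2 =
      c ^ 2 * ‖f x‖ ^ 2 - 2 * c * ⟪f x, g x⟫ + ‖g x‖ ^ 2 := fun x => by
    rw [norm_sub_sq_real, norm_smul, real_inner_smul_left, mul_pow, Real.norm_eq_abs, sq_abs]
    ring
  have hff := (hf.integrable_norm_pow two_ne_zero).const_mul (c ^ 2)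
  have hfg := (hf.integrable_inner hg).const_mul (2 * c)
  simp_rw [hexpand]
  rw [integral_add _ (hg.integrable_norm_pow two_ne_zero), integral_sub hff hfg,
    integral_const_mul, integral_const_mul]
  exact hff.sub hfg

end MeasureTheory

theorem sq_L2norm {n : ℕ} {T : ℝ} (hT : 0 ≤ T) (f : ℝ → EuclideanSpace ℝ (Fin n)) :
    L2norm T f ^ 2 = ∫ t in (0:ℝ)..T, ‖f t‖ ^ 2 :=
  Real.sq_sqrt (integral_nonneg hT fun _ _ => sq_nonneg _)

/-- Expanding the square, `S(T, φ̄) = A² / (2T) + T B² / 2 - ∫₀¹⟨φ̄', b(φ̄)⟩` with `A = ‖φ̄'‖`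
and `B = ‖b(φ̄)‖`; completing the square in `T` gives the formula. -/
theorem Ssc_eq_Shat_add {n : ℕ} {b : EuclideanSpace ℝ (Fin n) → EuclideanSpace ℝ (Fin n)}
    {φ dφ : ℝ → EuclideanSpace ℝ (Fin n)}
    (hdφ : MemLp dφ 2 (volume.restrict (Set.Ioc (0:ℝ) 1)))
    (hbφ : MemLp (fun s => b (φ s)) 2 (volume.restrict (Set.Ioc (0:ℝ) 1)))
    {T : ℝ} (hT : T ≠ 0) :
    Ssc b T φ dφ = Shat b φ dφ +
      (L2norm 1 dφ - T * L2norm 1 (fun s => b (φ s))) ^ 2 / (2 * T) := by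
  have hA := sq_L2norm zero_le_one dφ
  have hB := sq_L2norm zero_le_one (fun s => b (φ s))
  simp only [intervalIntegral.integral_of_le zero_le_one] at hA hB
  rw [Ssc, Shat, intervalIntegral.integral_of_le zero_le_one,
    intervalIntegral.integral_of_le zero_le_one, integral_norm_smul_sub_sq hdφ hbφ, ← hA, ← hB]
  field_simp
  ring

/-- for a path `φ̄` with `‖φ̄'‖_{L²} > 0` and `‖b(φ̄)‖_{L²} > 0`, the map
`T ↦ S(T,φ̄)` on `(0,∞)` attains its infimum exactly at `T̂(φ̄)`, and
`inf_{T>0} S(T,φ̄) = S(T̂(φ̄),φ̄) = ‖φ̄'‖‖b(φ̄)‖ − ∫₀¹⟨φ̄', b(φ̄)⟩`. -/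
theorem stmt1 {n : ℕ} (b : EuclideanSpace ℝ (Fin n) → EuclideanSpace ℝ (Fin n))
    (φ dφ : ℝ → EuclideanSpace ℝ (Fin n))
    (hφ : IsH1Path 1 φ dφ)
    (hbφ : MeasureTheory.MemLp (fun s => b (φ s)) 2
      (MeasureTheory.volume.restrict (Set.Ioc (0:ℝ) 1)))
    (hA : 0 < L2norm 1 dφ)
    (hB : 0 < L2norm 1 (fun s => b (φ s))) :
    (0 < That b φ dφ) ∧
    (∀ T : ℝ, 0 < T → Ssc b (That b φ dφ) φ dφ ≤ Ssc b T φ dφ) ∧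
    (∀ T : ℝ, 0 < T → T ≠ That b φ dφ → Ssc b (That b φ dφ) φ dφ < Ssc b T φ dφ) ∧
    IsGLB {v : ℝ | ∃ T, 0 < T ∧ v = Ssc b T φ dφ} (Ssc b (That b φ dφ) φ dφ) ∧
    Ssc b (That b φ dφ) φ dφ = Shat b φ dφ := by
  have hThat : 0 < That b φ dφ := div_pos hA hB
  have hexcess {T : ℝ} (hT : 0 < T) := Ssc_eq_Shat_add hφ.1 hbφ hT.ne'
  have hmin : Ssc b (That b φ dφ) φ dφ = Shat b φ dφ := by
    rw [hexcess hThat, That, div_mul_cancel₀ _ hB.ne', sub_self]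
    simp
  have hle {T : ℝ} (hT : 0 < T) : Ssc b (That b φ dφ) φ dφ ≤ Ssc b T φ dφ := by
    rw [hmin, hexcess hT]
    exact le_add_of_nonneg_right (div_nonneg (sq_nonneg _) (by positivity))
  refine ⟨hThat, fun T hT => hle hT, fun T hT hne => ?_, ⟨?_, ?_⟩, hmin⟩
  · rw [hmin, hexcess hT, lt_add_iff_pos_right]
    have hgap : L2norm 1 dφ - T * L2norm 1 (fun s => b (φ s)) ≠ 0 := by
      contrapose! hne
      rw [That, eq_div_iff hB.ne']
      linarith
    exact div_pos (sq_pos_of_ne_zero hgap) (by linarith)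
  · rintro v ⟨T, hT, rfl⟩
    exact hle hT
  · exact fun w hw => hw ⟨That b φ dφ, hThat, rfl⟩
end
end

section
/- Let b : ℝⁿ → ℝⁿ be globally Lipschitz and fix T > 0 and x₁, x₂ ∈ ℝⁿ. Then there exists at least one φ* ∈ A_T such that S_T(φ*) = min_{φ∈A_T} S_T(φ), i.e. the Freidlin–Wentzell action functional attains its infimum over the admissible set A_T. -/
open MeasureTheory Filter intervalIntegral
open scoped RealInnerProductSpace Topology

noncomputable section

/-! Direct method of the calculus of variations. Along a minimizing sequence the residuals
`φₖ' - b(φₖ)` are bounded in `L²`; Grönwall's inequality, with `‖b y‖ ≤ ‖b x₁‖ + K ‖y - x₁‖`,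
turns this into a uniform bound on the paths, hence on `b(φₖ)` and on `φₖ'` in `L²`. A subsequence
of the derivatives converges weakly in `L²` (sequential Banach–Alaoglu) to some `z`; testing
against indicators of `(0,t]` shows `φₖ(t) → x₁ + ∫₀ᵗ z`, so the limit path is admissible and
`b(φₖ) → b(φ)` boundedly, hence weakly. The residuals thus converge weakly to the residual of the
limit, and weak lower semicontinuity of the `L²` norm shows that the limit attains the infimum. -/

section InnerProductSpace

variable {H : Type*} [NormedAddCommGroup H] [InnerProductSpace ℝ H]

theorem exists_strictMono_tendsto_inner [CompleteSpace H] [TopologicalSpace.SeparableSpace H]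
    {x : ℕ → H} {R : ℝ} (hx : ∀ k, ‖x k‖ ≤ R) :
    ∃ z : H, ∃ σ : ℕ → ℕ, StrictMono σ ∧
      ∀ y, Tendsto (fun k => ⟪x (σ k), y⟫) atTop (𝓝 ⟪z, y⟫) := by
  let f : ℕ → WeakDual ℝ H := fun k => StrongDual.toWeakDual (InnerProductSpace.toDual ℝ H (x k))
  have hf : ∀ k, f k ∈ WeakDual.toStrongDual ⁻¹' Metric.closedBall 0 R := fun k => by
    simpa [f] using hx k
  obtain ⟨a, -, σ, hσ, hlim⟩ := WeakDual.isSeqCompact_closedBall ℝ H 0 R hf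
  refine ⟨(InnerProductSpace.toDual ℝ H).symm (WeakDual.toStrongDual a), σ, hσ, fun y => ?_⟩
  rw [InnerProductSpace.toDual_symm_apply]
  exact ((WeakDual.eval_continuous y).tendsto a).comp hlim

theorem norm_sq_le_of_tendsto_inner {x : ℕ → H} {w : H} {c : ℕ → ℝ} {L : ℝ}
    (hx : Tendsto (fun k => ⟪x k, w⟫) atTop (𝓝 ⟪w, w⟫)) (hc : Tendsto c atTop (𝓝 L))
    (hle : ∀ k, ‖x k‖ ^ 2 ≤ c k) : ‖w‖ ^ 2 ≤ L := by
  have hlim : Tendsto (fun k => 2 * ⟪x k, w⟫ - ‖w‖ ^ 2) atTop (𝓝 (‖w‖ ^ 2)) := by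
    convert (hx.const_mul 2).sub_const (‖w‖ ^ 2) using 2
    rw [real_inner_self_eq_norm_sq]; ring
  refine le_of_tendsto_of_tendsto' hlim hc fun k => ?_
  nlinarith [norm_sub_sq_real (x k) w, sq_nonneg ‖x k - w‖, hle k]

theorem tendsto_of_tendsto_inner [FiniteDimensional ℝ H] {ι : Type*} {l : Filter ι}
    {v : ι → H} {x : H} (h : ∀ c, Tendsto (fun k => ⟪v k, c⟫) l (𝓝 ⟪x, c⟫)) :
    Tendsto v l (𝓝 x) := by
  let e := stdOrthonormalBasis ℝ H
  have hv : v = fun k => ∑ i, ⟪e i, v k⟫ • e i := funext fun k => (e.sum_repr' _).symm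
  rw [hv, ← e.sum_repr' x]
  refine tendsto_finsetSum _ fun i _ => Tendsto.smul_const ?_ _
  simpa only [real_inner_comm (e i)] using h (e i)

end InnerProductSpace

section L2

variable {α E : Type*} [MeasurableSpace α] {μ : Measure α}
  [NormedAddCommGroup E] [InnerProductSpace ℝ E]

theorem MeasureTheory.MemLp.inner_toLp_toLp {f g : α → E} (hf : MemLp f 2 μ)
    (hg : MemLp g 2 μ) : ⟪hf.toLp f, hg.toLp g⟫ = ∫ a, ⟪f a, g a⟫ ∂μ := by
  rw [L2.inner_def]
  refine integral_congr_ae ?_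
  filter_upwards [hf.coeFn_toLp, hg.coeFn_toLp] with a hfa hga
  rw [hfa, hga]

theorem MeasureTheory.MemLp.norm_toLp_sq {f : α → E} (hf : MemLp f 2 μ) :
    ‖hf.toLp f‖ ^ 2 = ∫ a, ‖f a‖ ^ 2 ∂μ := by
  simp_rw [← real_inner_self_eq_norm_sq, hf.inner_toLp_toLp hf]

theorem tendsto_inner_toLp_of_tendsto_ae [IsFiniteMeasure μ] {F : ℕ → α → E} {f : α → E}
    (hF : ∀ k, MemLp (F k) 2 μ) (hf : MemLp f 2 μ) {M : ℝ} (hM : ∀ k, ∀ᵐ a ∂μ, ‖F k a‖ ≤ M)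
    (hlim : ∀ᵐ a ∂μ, Tendsto (fun k => F k a) atTop (𝓝 (f a))) (g : Lp E 2 μ) :
    Tendsto (fun k => ⟪(hF k).toLp (F k), g⟫) atTop (𝓝 ⟪hf.toLp f, g⟫) := by
  have hg := Lp.memLp g
  rw [← Lp.toLp_coeFn g hg]
  simp_rw [MemLp.inner_toLp_toLp]
  refine tendsto_integral_of_dominated_convergence (fun a => M * ‖g a‖)
    (fun k => (hF k).1.inner hg.1) ((hg.integrable one_le_two).norm.const_mul M) (fun k => ?_) ?_
  · filter_upwards [hM k] with a ha
    rw [Real.norm_eq_abs]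
    exact (abs_real_inner_le_norm _ _).trans (by gcongr)
  · filter_upwards [hlim] with a ha
    exact ha.inner tendsto_const_nhds

end L2

open Set

section Gronwall

open Real

theorem add_mul_gronwallBound_zero (A K t : ℝ) :
    A + K * gronwallBound 0 K A t = A * exp (K * t) := by
  rcases eq_or_ne K 0 with rfl | hK
  · simp [gronwallBound_K0]
  · rw [gronwallBound_of_K_ne_0 hK]
    field_simp
    ring

theorem le_mul_exp_of_le_add_mul_integral {u : ℝ → ℝ} {A K T : ℝ} (hK : 0 ≤ K)
    (hu : ContinuousOn u (Icc 0 T)) (h : ∀ t ∈ Icc 0 T, u t ≤ A + K * ∫ s in 0..t, u s)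
    {t : ℝ} (ht : t ∈ Icc 0 T) : u t ≤ A * exp (K * t) := by
  set G : ℝ → ℝ := fun t => ∫ s in 0..t, u s
  have hderiv : ∀ x ∈ Ico 0 T, HasDerivWithinAt G (u x) (Ici x) x := by
    intro x hx
    have hnhds : Icc 0 T ∈ 𝓝[>] x :=
      mem_of_superset (Ioo_mem_nhdsGT hx.2) (Ioo_subset_Icc_self.trans (Icc_subset_Icc_left hx.1))
    exact integral_hasDerivWithinAt_right
      (hu.mono (uIcc_subset_Icc ⟨le_rfl, hx.1.trans hx.2.le⟩
        (Ico_subset_Icc_self hx))).intervalIntegrable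
      ((hu.stronglyMeasurableAtFilter_nhdsWithin measurableSet_Icc x).filter_mono
        (nhdsWithin_le_of_mem hnhds))
      ((hu x (Ico_subset_Icc_self hx)).mono_of_mem_nhdsWithin hnhds)
  have hG : G t ≤ gronwallBound 0 K A (t - 0) := by
    refine le_gronwallBound_of_liminf_deriv_right_le (f' := u) ?_
      (fun x hx r hr => (hderiv x hx).liminf_right_slope_le hr) (by simp [G])
      (fun x hx => by linarith [h x (Ico_subset_Icc_self hx)]) t ht
    have := intervalIntegral.continuousOn_primitive_interval (μ := volume) (a := 0) (b := T)
      (hu.integrableOn_compact isCompact_Icc |>.mono_set (by rw [uIcc_of_le (ht.1.trans ht.2)]))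
    rwa [uIcc_of_le (ht.1.trans ht.2)] at this
  calc u t ≤ A + K * G t := h t ht
    _ ≤ A + K * gronwallBound 0 K A t := by gcongr; simpa using hG
    _ = A * exp (K * t) := add_mul_gronwallBound_zero A K t

end Gronwall

theorem ContinuousOn.memLp_Ioc {E : Type*} [NormedAddCommGroup E] {g : ℝ → E} {a b : ℝ}
    {p : ENNReal} (hg : ContinuousOn g (Icc a b)) : MemLp g p (volume.restrict (Ioc a b)) := by
  obtain ⟨C, hC⟩ := isCompact_Icc.exists_bound_of_continuousOn hg
  refine MemLp.of_bound ((hg.mono Ioc_subset_Icc_self).aestronglyMeasurable measurableSet_Ioc) C ?_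
  filter_upwards [ae_restrict_mem measurableSet_Ioc] with t ht
  exact hC t (Ioc_subset_Icc_self ht)

section H1Path

variable {n : ℕ} {T : ℝ} {φ dφ : ℝ → EuclideanSpace ℝ (Fin n)}
  {b : EuclideanSpace ℝ (Fin n) → EuclideanSpace ℝ (Fin n)}

theorem IsH1Path.integrableOn (h : IsH1Path T φ dφ) : IntegrableOn dφ (Ioc 0 T) :=
  h.1.integrable one_le_two

theorem IsH1Path.continuousOn (h : IsH1Path T φ dφ) : ContinuousOn φ (Icc 0 T) := by
  have hprim := intervalIntegral.continuousOn_primitive (μ := volume)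
    ((integrableOn_Icc_iff_integrableOn_Ioc).mpr h.integrableOn)
  refine ((continuousOn_const (c := φ 0)).add hprim).congr fun t ht => ?_
  rw [h.2 t ht, intervalIntegral.integral_of_le ht.1]; rfl

theorem IsH1Path.memLp_comp (h : IsH1Path T φ dφ) (hb : Continuous b) :
    MemLp (fun t => b (φ t)) 2 (volume.restrict (Ioc 0 T)) :=
  (hb.comp_continuousOn h.continuousOn).memLp_Ioc

theorem IsH1Path.action_eq (hT : 0 ≤ T) (h : IsH1Path T φ dφ) (hb : Continuous b) :
    action b T φ dφ = ‖h.1.toLp dφ - (h.memLp_comp hb).toLp _‖ ^ 2 / 2 := by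
  rw [← MemLp.toLp_sub, MemLp.norm_toLp_sq, action, intervalIntegral.integral_of_le hT]
  simp only [Pi.sub_apply]
  ring

theorem action_nonneg (hT : 0 ≤ T) : 0 ≤ action b T φ dφ :=
  mul_nonneg (by norm_num) (intervalIntegral.integral_nonneg hT fun _ _ => sq_nonneg _)

end H1Path

section APriori

variable {n : ℕ} {T : ℝ} {φ dφ : ℝ → EuclideanSpace ℝ (Fin n)}
  {b : EuclideanSpace ℝ (Fin n) → EuclideanSpace ℝ (Fin n)}

theorem MeasureTheory.IntegrableOn.intervalIntegrable_of_mem_Icc {E : Type*} [NormedAddCommGroup E]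
    {g : ℝ → E} {s : ℝ} (hg : IntegrableOn g (Ioc 0 T)) (hs : s ∈ Icc 0 T) :
    IntervalIntegrable g volume 0 s :=
  (intervalIntegrable_iff_integrableOn_Ioc_of_le hs.1).2 (hg.mono_set (Ioc_subset_Ioc_right hs.2))

theorem LipschitzWith.norm_le_add_mul_norm_sub {E F : Type*} [SeminormedAddCommGroup E]
    [SeminormedAddCommGroup F] {K : NNReal} {f : E → F} (hf : LipschitzWith K f) (x y : E) :
    ‖f y‖ ≤ ‖f x‖ + K * ‖y - x‖ := by
  linarith [hf.norm_sub_le y x, norm_le_insert' (f y) (f x)]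

theorem IsH1Path.norm_sub_le_add_mul_integral (hT : 0 ≤ T) (h : IsH1Path T φ dφ) {K : NNReal}
    (hb : LipschitzWith K b) {C : ℝ} (hC : action b T φ dφ ≤ C) {s : ℝ} (hs : s ∈ Icc 0 T) :
    ‖φ s - φ 0‖ ≤ ((1 + ‖b (φ 0)‖) * T + 2 * C) + K * ∫ r in 0..s, ‖φ r - φ 0‖ := by
  set B := ‖b (φ 0)‖
  set u : ℝ → ℝ := fun r => ‖φ r - φ 0‖
  have hres_memLp := h.1.sub (h.memLp_comp hb.continuous)
  have hres : IntegrableOn (fun r => ‖dφ r - b (φ r)‖ ^ 2) (Ioc 0 T) :=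
    (memLp_two_iff_integrable_sq_norm hres_memLp.1).1 hres_memLp
  have hress := hres.intervalIntegrable_of_mem_Icc hs
  have hus : IntervalIntegrable u volume 0 s :=
    ((h.continuousOn.sub continuousOn_const).norm.mono
      (Icc_subset_Icc_right hs.2)).intervalIntegrable_of_Icc hs.1
  calc u s = ‖∫ r in 0..s, dφ r‖ := by simp only [u, h.2 s hs, add_sub_cancel_left]
    _ ≤ ∫ r in 0..s, ‖dφ r‖ := intervalIntegral.norm_integral_le_integral_norm hs.1
    _ ≤ ∫ r in 0..s, ((1 + B) + ‖dφ r - b (φ r)‖ ^ 2 + K * u r) := by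
      refine intervalIntegral.integral_mono_on hs.1
        (h.integrableOn.intervalIntegrable_of_mem_Icc hs).norm
        ((intervalIntegrable_const.add hress).add (hus.const_mul _)) fun r _ => ?_
      have hlip : ‖b (φ r)‖ ≤ B + K * u r := hb.norm_le_add_mul_norm_sub _ _
      -- `x ≤ 1 + x²` controls the residual in `L¹` by its square
      nlinarith [norm_le_insert' (dφ r) (b (φ r)), sq_nonneg (‖dφ r - b (φ r)‖ - 1)]
    _ = (1 + B) * s + (∫ r in 0..s, ‖dφ r - b (φ r)‖ ^ 2) + K * ∫ r in 0..s, u r := by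
      rw [intervalIntegral.integral_add (intervalIntegrable_const.add hress) (hus.const_mul _),
        intervalIntegral.integral_add intervalIntegrable_const hress,
        intervalIntegral.integral_const, intervalIntegral.integral_const_mul]
      simp only [sub_zero, smul_eq_mul]
      ring
    _ ≤ ((1 + B) * T + 2 * C) + K * ∫ r in 0..s, u r := by
      have hmono := intervalIntegral.integral_mono_interval le_rfl hs.1 hs.2
        (ae_of_all _ fun r => sq_nonneg ‖dφ r - b (φ r)‖)
        (hres.intervalIntegrable_of_mem_Icc ⟨hT, le_rfl⟩)
      have : (1 + B) * s ≤ (1 + B) * T := by gcongr; exact hs.2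
      rw [action] at hC
      linarith

theorem IsH1Path.norm_sub_le_of_action_le (hT : 0 ≤ T) (h : IsH1Path T φ dφ) {K : NNReal}
    (hb : LipschitzWith K b) {C : ℝ} (hC : action b T φ dφ ≤ C) {t : ℝ} (ht : t ∈ Icc 0 T) :
    ‖φ t - φ 0‖ ≤ ((1 + ‖b (φ 0)‖) * T + 2 * C) * Real.exp (K * T) := by
  have hA : 0 ≤ (1 + ‖b (φ 0)‖) * T + 2 * C := by
    have := (action_nonneg hT).trans hC
    positivity
  calc ‖φ t - φ 0‖ ≤ ((1 + ‖b (φ 0)‖) * T + 2 * C) * Real.exp (K * t) :=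
        le_mul_exp_of_le_add_mul_integral K.2 (h.continuousOn.sub continuousOn_const).norm
          (fun s hs => h.norm_sub_le_add_mul_integral hT hb hC hs) ht
    _ ≤ ((1 + ‖b (φ 0)‖) * T + 2 * C) * Real.exp (K * T) := by gcongr; exact ht.2

end APriori

section WeakLimit

variable {n : ℕ} {T : ℝ} {φ dφ : ℕ → ℝ → EuclideanSpace ℝ (Fin n)}
  {b : EuclideanSpace ℝ (Fin n) → EuclideanSpace ℝ (Fin n)}

theorem inner_toLp_indicatorConstLp_Ioc {E : Type*} [NormedAddCommGroup E]
    [InnerProductSpace ℝ E] [CompleteSpace E] {g : ℝ → E}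
    (hg : MemLp g 2 (volume.restrict (Ioc 0 T))) {t : ℝ} (ht : t ∈ Icc 0 T) (c : E) :
    ⟪hg.toLp g, indicatorConstLp 2 measurableSet_Ioc (measure_ne_top _ (Ioc 0 t)) c⟫ =
      ⟪∫ s in 0..t, g s, c⟫ := by
  rw [real_inner_comm, L2.inner_indicatorConstLp_eq_inner_setIntegral,
    integral_congr_ae (ae_restrict_of_ae hg.coeFn_toLp),
    Measure.restrict_restrict measurableSet_Ioc, inter_eq_left.2 (Ioc_subset_Ioc_right ht.2),
    ← intervalIntegral.integral_of_le ht.1, real_inner_comm]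

theorem tendsto_apply_of_tendsto_inner_toLp (h : ∀ k, IsH1Path T (φ k) (dφ k))
    {x : EuclideanSpace ℝ (Fin n)} (h0 : ∀ k, φ k 0 = x)
    {z : Lp (EuclideanSpace ℝ (Fin n)) 2 (volume.restrict (Ioc 0 T))}
    (hz : ∀ y, Tendsto (fun k => ⟪(h k).1.toLp (dφ k), y⟫) atTop (𝓝 ⟪z, y⟫))
    {t : ℝ} (ht : t ∈ Icc 0 T) :
    Tendsto (fun k => φ k t) atTop (𝓝 (x + ∫ s in 0..t, z s)) := by
  refine tendsto_of_tendsto_inner fun c => ?_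
  have hlim := hz (indicatorConstLp 2 measurableSet_Ioc (measure_ne_top _ (Ioc 0 t)) c)
  rw [← Lp.toLp_coeFn z (Lp.memLp z), inner_toLp_indicatorConstLp_Ioc _ ht] at hlim
  have hφt : ∀ k, φ k t = x + ∫ s in 0..t, dφ k s := fun k => by rw [(h k).2 t ht, h0]
  simp only [hφt, inner_add_left, inner_toLp_indicatorConstLp_Ioc _ ht] at hlim ⊢
  exact tendsto_const_nhds.add hlim

end WeakLimit

section DirectMethod

variable {n : ℕ} {T : ℝ} {φ dφ : ℕ → ℝ → EuclideanSpace ℝ (Fin n)}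
  {b : EuclideanSpace ℝ (Fin n) → EuclideanSpace ℝ (Fin n)}

theorem exists_strictMono_tendsto_inner_toLp (hT : 0 ≤ T) (hb : Continuous b)
    (h : ∀ k, IsH1Path T (φ k) (dφ k)) {C M : ℝ} (hC : ∀ k, action b T (φ k) (dφ k) ≤ C)
    (hM : ∀ k, ∀ t ∈ Icc 0 T, ‖b (φ k t)‖ ≤ M) :
    ∃ z : Lp (EuclideanSpace ℝ (Fin n)) 2 (volume.restrict (Ioc 0 T)), ∃ σ : ℕ → ℕ,
      StrictMono σ ∧
        ∀ y, Tendsto (fun j => ⟪(h (σ j)).1.toLp (dφ (σ j)), y⟫) atTop (𝓝 ⟪z, y⟫) := by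
  -- makes `Lp.SecondCountableTopology` available, hence separability of `L²`
  have : Fact ((2 : ENNReal) ≠ ⊤) := ⟨ENNReal.ofNat_ne_top⟩
  set B := fun k => ((h k).memLp_comp hb).toLp _
  have hM0 : 0 ≤ M := (norm_nonneg _).trans (hM 0 0 ⟨le_rfl, hT⟩)
  have hB : ∀ k,
      ‖B k‖ ≤ measureUnivNNReal (volume.restrict (Ioc 0 T)) ^ (2 : ENNReal).toReal⁻¹ * M :=
    fun k => Lp.norm_le_of_ae_bound hM0 <| by
      filter_upwards [((h k).memLp_comp hb).coeFn_toLp,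
        ae_restrict_of_forall_mem measurableSet_Ioc fun t ht => hM k t (Ioc_subset_Icc_self ht)]
        with t hBt hMt
      rwa [hBt]
  have hDB : ∀ k, ‖(h k).1.toLp (dφ k) - B k‖ ≤ √(2 * C) := fun k =>
    Real.le_sqrt_of_sq_le (by linarith [(h k).action_eq hT hb, hC k])
  obtain ⟨z, σ, hσ, hz⟩ := exists_strictMono_tendsto_inner
    fun k => (norm_le_insert' _ (B k)).trans (add_le_add (hB k) (hDB k))
  exact ⟨z, σ, hσ, hz⟩

theorem adm_primitive_and_action_le_of_tendsto_inner_toLp (hT : 0 ≤ T) (hb : Continuous b)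
    {x₁ x₂ : EuclideanSpace ℝ (Fin n)} (hadm : ∀ k, Adm T x₁ x₂ (φ k) (dφ k)) {M : ℝ}
    (hM : ∀ k, ∀ t ∈ Icc 0 T, ‖b (φ k t)‖ ≤ M)
    {z : Lp (EuclideanSpace ℝ (Fin n)) 2 (volume.restrict (Ioc 0 T))}
    (hz : ∀ y, Tendsto (fun k => ⟪(hadm k).1.1.toLp (dφ k), y⟫) atTop (𝓝 ⟪z, y⟫))
    {c : ℕ → ℝ} {m : ℝ} (hc : Tendsto c atTop (𝓝 m))
    (hact : ∀ k, action b T (φ k) (dφ k) ≤ c k) :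
    Adm T x₁ x₂ (fun t => x₁ + ∫ s in 0..t, z s) z ∧
      action b T (fun t => x₁ + ∫ s in 0..t, z s) z ≤ m := by
  set ψ : ℝ → EuclideanSpace ℝ (Fin n) := fun t => x₁ + ∫ s in 0..t, z s
  have hψ : IsH1Path T ψ z := ⟨Lp.memLp z, fun t _ => by simp [ψ]⟩
  have hpt : ∀ t ∈ Icc 0 T, Tendsto (fun k => φ k t) atTop (𝓝 (ψ t)) := fun t ht =>
    tendsto_apply_of_tendsto_inner_toLp (fun k => (hadm k).1) (fun k => (hadm k).2.1) hz ht
  have hψT : ψ T = x₂ := tendsto_nhds_unique (hpt T ⟨hT, le_rfl⟩)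
    (by simp only [fun k => (hadm k).2.2, tendsto_const_nhds])
  refine ⟨⟨hψ, by simp [ψ], hψT⟩, ?_⟩
  set B := fun k => ((hadm k).1.memLp_comp hb).toLp _
  set B' := (hψ.memLp_comp hb).toLp _
  have hB : ∀ y, Tendsto (fun k => ⟪B k, y⟫) atTop (𝓝 ⟪B', y⟫) :=
    tendsto_inner_toLp_of_tendsto_ae _ _
      (fun k => ae_restrict_of_forall_mem measurableSet_Ioc fun t ht =>
        hM k t (Ioc_subset_Icc_self ht))
      (ae_restrict_of_forall_mem measurableSet_Ioc fun t ht =>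
        (hb.tendsto _).comp (hpt t (Ioc_subset_Icc_self ht)))
  have hw : Tendsto (fun k => ⟪(hadm k).1.1.toLp (dφ k) - B k, z - B'⟫) atTop
      (𝓝 ⟪z - B', z - B'⟫) := by
    simp only [inner_sub_left]
    exact (hz _).sub (hB _)
  have hlsc := norm_sq_le_of_tendsto_inner hw (hc.const_mul 2) fun k => by
    linarith [(hadm k).1.action_eq hT hb, hact k]
  rw [hψ.action_eq hT hb, Lp.toLp_coeFn]
  linarith

end DirectMethod

section Minimization

variable {n : ℕ} {T : ℝ} {b : EuclideanSpace ℝ (Fin n) → EuclideanSpace ℝ (Fin n)}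
  {x₁ x₂ : EuclideanSpace ℝ (Fin n)}

theorem adm_segment (hT : 0 < T) (x₁ x₂ : EuclideanSpace ℝ (Fin n)) :
    Adm T x₁ x₂ (fun t => x₁ + (t / T) • (x₂ - x₁)) (fun _ => T⁻¹ • (x₂ - x₁)) := by
  refine ⟨⟨memLp_const _, fun t _ => ?_⟩, by simp, by simp [hT.ne']⟩
  simp only [intervalIntegral.integral_const, sub_zero, zero_div, zero_smul, add_zero]
  module

theorem sInf_probISet_le (hT : 0 ≤ T) {φ dφ : ℝ → EuclideanSpace ℝ (Fin n)}
    (h : Adm T x₁ x₂ φ dφ) : sInf (probISet b T x₁ x₂) ≤ action b T φ dφ :=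
  csInf_le ⟨0, by rintro _ ⟨_, _, -, rfl⟩; exact action_nonneg hT⟩ ⟨φ, dφ, h, rfl⟩

variable (b x₁ x₂) in
theorem exists_seq_action_le_sInf_probISet_add (hT : 0 < T) :
    ∃ φ dφ : ℕ → ℝ → EuclideanSpace ℝ (Fin n), (∀ k, Adm T x₁ x₂ (φ k) (dφ k)) ∧
      ∀ k : ℕ, action b T (φ k) (dφ k) ≤ sInf (probISet b T x₁ x₂) + 1 / (k + 1) := by
  have hne : (probISet b T x₁ x₂).Nonempty := ⟨_, _, _, adm_segment hT x₁ x₂, rfl⟩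
  have hseq : ∀ k : ℕ, ∃ φ dφ, Adm T x₁ x₂ φ dφ ∧
      action b T φ dφ ≤ sInf (probISet b T x₁ x₂) + 1 / (k + 1) := fun k => by
    obtain ⟨_, ⟨φ, dφ, hadm, rfl⟩, hlt⟩ := Real.lt_sInf_add_pos hne Nat.one_div_pos_of_nat
    exact ⟨φ, dφ, hadm, hlt.le⟩
  choose φ dφ hadm hact using hseq
  exact ⟨φ, dφ, hadm, hact⟩

end Minimization

/-- Lemma 3.2: for a globally Lipschitz `b` and `T > 0`, the
Freidlin–Wentzell action functional `S_T` attains its infimum over `A_T`. -/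
theorem stmt5 {n : ℕ} (b : EuclideanSpace ℝ (Fin n) → EuclideanSpace ℝ (Fin n))
    (K : NNReal) (hb : LipschitzWith K b)
    (T : ℝ) (hT : 0 < T) (x₁ x₂ : EuclideanSpace ℝ (Fin n)) :
    ∃ φ dφ : ℝ → EuclideanSpace ℝ (Fin n), Adm T x₁ x₂ φ dφ ∧
      ∀ ψ dψ : ℝ → EuclideanSpace ℝ (Fin n), Adm T x₁ x₂ ψ dψ →
        action b T φ dφ ≤ action b T ψ dψ := by
  set m := sInf (probISet b T x₁ x₂)
  obtain ⟨φ, dφ, hadm, hact⟩ := exists_seq_action_le_sInf_probISet_add b x₁ x₂ hT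
  have hC : ∀ k, action b T (φ k) (dφ k) ≤ m + 1 := fun k => by
    have : (1 : ℝ) / (k + 1) ≤ 1 := by rw [div_le_one (by positivity)]; simp
    linarith [hact k]
  set U := ((1 + ‖b x₁‖) * T + 2 * (m + 1)) * Real.exp (K * T)
  have hM : ∀ k, ∀ t ∈ Icc 0 T, ‖b (φ k t)‖ ≤ ‖b x₁‖ + K * U := fun k t ht => by
    have hφ := (hadm k).1.norm_sub_le_of_action_le hT.le hb (hC k) ht
    rw [(hadm k).2.1] at hφ
    exact (hb.norm_le_add_mul_norm_sub x₁ _).trans (by gcongr)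
  obtain ⟨z, σ, hσ, hz⟩ := exists_strictMono_tendsto_inner_toLp hT.le hb.continuous
    (fun k => (hadm k).1) hC hM
  obtain ⟨hadm_lim, hact_lim⟩ := adm_primitive_and_action_le_of_tendsto_inner_toLp hT.le
    hb.continuous (fun j => hadm (σ j)) (fun j => hM (σ j)) hz
    (by simpa using (tendsto_one_div_add_atTop_nhds_zero_nat.comp hσ.tendsto_atTop).const_add m)
    fun j => hact (σ j)
  exact ⟨_, _, hadm_lim, fun ψ dψ hψ => hact_lim.trans (sInf_probISet_le hT.le hψ)⟩
end
end

section
/- Let b : ℝⁿ → ℝⁿ be globally Lipschitz with constant K and fix T > 0. Then there exist constants C₁, C₂ > 0 depending only on K and T such that for every φ ∈ H¹([0,T]; ℝⁿ) with φ(0) = 0, ‖φ'‖²_{L²(0,T)} ≤ C₁ |b(0)|² + 2 C₂ S_T(φ); equivalently, S_T(φ) ≥ (1/(2C₂)) ‖φ'‖²_{L²(0,T)} − (C₁/(2C₂)) |b(0)|², so S_T is coercive on paths starting at the origin. -/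
/-!
Write `F τ = ∫₀^τ ‖φ'‖²`. Since `φ(0) = 0`, Cauchy–Schwarz gives `‖φ(t)‖² ≤ t F(t) ≤ T F(t)`,
and `‖φ'‖ ≤ ‖φ' − b(φ)‖ + ‖b(0)‖ + K‖φ‖` turns this into the integral inequality
`F τ ≤ 4 S_T(φ) + 4T‖b(0)‖² + 4K²T ∫₀^τ F`. Grönwall's inequality then bounds `F T` by
`(4 S_T(φ) + 4T‖b(0)‖²) e^{4K²T²}`, which is the claim with `C₁ = 4T e^{4K²T²}` and
`C₂ = 2e^{4K²T²}`.
-/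

open MeasureTheory Filter intervalIntegral
open scoped RealInnerProductSpace Topology

noncomputable section

open Set

theorem sq_integral_norm_le_measureReal_mul_integral_norm_sq {α E : Type*} [MeasurableSpace α]
    [NormedAddCommGroup E] {μ : Measure α} [IsFiniteMeasure μ] {f : α → E} (hf : MemLp f 2 μ) :
    (∫ x, ‖f x‖ ∂μ) ^ 2 ≤ μ.real univ * ∫ x, ‖f x‖ ^ 2 ∂μ := by
  have h := integral_mul_le_Lp_mul_Lq_of_nonneg Real.HolderConjugate.two_two
    (ae_of_all _ fun x => norm_nonneg (f x)) (ae_of_all _ fun _ => zero_le_one)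
    (by simpa using hf.norm) (by simpa using memLp_const (μ := μ) (1 : ℝ))
  simp only [mul_one, Real.one_rpow, MeasureTheory.integral_const, smul_eq_mul] at h
  norm_num at h
  rw [← Real.sqrt_eq_rpow, ← Real.sqrt_eq_rpow, ← Real.sqrt_mul' _ measureReal_nonneg] at h
  have hsq : 0 ≤ ∫ x, ‖f x‖ ^ 2 ∂μ := integral_nonneg fun x => by positivity
  calc (∫ x, ‖f x‖ ∂μ) ^ 2 ≤ √((∫ x, ‖f x‖ ^ 2 ∂μ) * μ.real univ) ^ 2 :=
        pow_le_pow_left₀ (integral_nonneg fun x => norm_nonneg (f x)) h 2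
    _ = μ.real univ * ∫ x, ‖f x‖ ^ 2 ∂μ := by
        rw [Real.sq_sqrt (mul_nonneg hsq measureReal_nonneg), mul_comm]

theorem norm_sq_le_of_lipschitzWith {E F : Type*} [SeminormedAddCommGroup E]
    [SeminormedAddCommGroup F] {K : NNReal} {b : E → F} (hb : LipschitzWith K b) (v : F) (x y : E) :
    ‖v‖ ^ 2 ≤ 2 * ‖v - b x‖ ^ 2 + 4 * ‖b y‖ ^ 2 + 4 * K ^ 2 * ‖x - y‖ ^ 2 := by
  have hL : ‖b x - b y‖ ≤ K * ‖x - y‖ := by simpa [dist_eq_norm] using hb.dist_le_mul x y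
  have hv : ‖v‖ ≤ ‖v - b x‖ + (‖b y‖ + K * ‖x - y‖) :=
    calc ‖v‖ = ‖(v - b x) + b y + (b x - b y)‖ := by abel_nf
      _ ≤ ‖v - b x‖ + ‖b y‖ + ‖b x - b y‖ := norm_add₃_le
      _ ≤ _ := by linarith
  calc ‖v‖ ^ 2 ≤ (‖v - b x‖ + (‖b y‖ + K * ‖x - y‖)) ^ 2 := by gcongr
    _ ≤ 2 * (‖v - b x‖ ^ 2 + (‖b y‖ + K * ‖x - y‖) ^ 2) := add_sq_le
    _ ≤ 2 * (‖v - b x‖ ^ 2 + 2 * (‖b y‖ ^ 2 + (K * ‖x - y‖) ^ 2)) := by gcongr; exact add_sq_le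
    _ = _ := by ring

theorem MeasureTheory.MemLp.intervalIntegrable_norm_sq {E : Type*} [NormedAddCommGroup E]
    {g : ℝ → E} {a b c : ℝ} (hg : MemLp g 2 (volume.restrict (Ioc a b))) (hc : c ∈ Icc a b) :
    IntervalIntegrable (fun s => ‖g s‖ ^ 2) volume a c := by
  rw [intervalIntegrable_iff_integrableOn_Ioc_of_le hc.1]
  have hint : IntegrableOn (fun s => ‖g s‖ ^ 2) (Ioc a b) := hg.integrable_norm_pow two_ne_zero
  exact hint.mono_set (Ioc_subset_Ioc_right hc.2)

theorem continuousOn_integral_of_integrableOn_Icc {E : Type*} [NormedAddCommGroup E]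
    [NormedSpace ℝ E] {f : ℝ → E} {a b : ℝ} (hf : IntegrableOn f (Icc a b)) :
    ContinuousOn (fun x => ∫ t in a..x, f t) (Icc a b) := by
  rcases le_or_gt a b with hab | hab
  · rw [← uIcc_of_le hab] at hf ⊢
    exact continuousOn_primitive_interval hf
  · simp [Icc_eq_empty_of_lt hab]

theorem mul_gronwallBound_zero_left (B A x : ℝ) :
    B * gronwallBound 0 B A x = A * (Real.exp (B * x) - 1) := by
  rcases eq_or_ne B 0 with rfl | hB
  · simp
  · rw [gronwallBound_of_K_ne_0 hB]
    field_simp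
    ring

theorem le_mul_exp_of_le_add_mul_integral_s6 {F : ℝ → ℝ} {A B a b : ℝ} (hB : 0 ≤ B)
    (hF : ContinuousOn F (Icc a b)) (bound : ∀ x ∈ Icc a b, F x ≤ A + B * ∫ s in a..x, F s) :
    ∀ x ∈ Icc a b, F x ≤ A * Real.exp (B * (x - a)) := by
  set G := fun x => ∫ s in a..x, F s
  have hGcont : ContinuousOn G (Icc a b) :=
    continuousOn_integral_of_integrableOn_Icc hF.integrableOn_Icc
  have hG' : ∀ x ∈ Ico a b, HasDerivWithinAt G (F x) (Ici x) x := by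
    intro x hx
    have hmem : Icc a b ∈ 𝓝[>] x := Icc_mem_nhdsGT_of_mem hx
    exact integral_hasDerivWithinAt_right (t := Ioi x)
      ((hF.mono (Icc_subset_Icc_right hx.2.le)).intervalIntegrable_of_Icc hx.1)
      ⟨Icc a b, hmem, hF.aestronglyMeasurable measurableSet_Icc⟩
      ((hF x (Ico_subset_Icc_self hx)).mono_of_mem_nhdsWithin hmem)
  have hG : ∀ x ∈ Icc a b, G x ≤ gronwallBound 0 B A (x - a) :=
    le_gronwallBound_of_liminf_deriv_right_le hGcont
      (fun x hx _ hr => (hG' x hx).liminf_right_slope_le hr) (by simp [G])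
      (fun x hx => by linarith [bound x (Ico_subset_Icc_self hx)])
  intro x hx
  calc F x ≤ A + B * G x := bound x hx
    _ ≤ A + B * gronwallBound 0 B A (x - a) := by gcongr; exact hG x hx
    _ = A * Real.exp (B * (x - a)) := by rw [mul_gronwallBound_zero_left]; ring

namespace IsH1Path

variable {n : ℕ} {T : ℝ} {φ dφ : ℝ → EuclideanSpace ℝ (Fin n)}

theorem continuousOn_s6 (h : IsH1Path T φ dφ) : ContinuousOn φ (Icc 0 T) :=
  (continuousOn_const.add (continuousOn_integral_of_integrableOn_Icc
    ((integrableOn_Icc_iff_integrableOn_Ioc).2 (h.1.integrable one_le_two)))).congr h.2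

theorem memLp_comp_s6 {F : Type*} [NormedAddCommGroup F] (h : IsH1Path T φ dφ)
    {g : EuclideanSpace ℝ (Fin n) → F} (hg : Continuous g) :
    MemLp (fun t => g (φ t)) 2 (volume.restrict (Ioc 0 T)) := by
  have hc : ContinuousOn (fun t => g (φ t)) (Icc 0 T) := hg.comp_continuousOn h.continuousOn_s6
  obtain ⟨M, hM⟩ := isCompact_Icc.exists_bound_of_continuousOn hc
  refine MemLp.of_bound ((hc.mono Ioc_subset_Icc_self).aestronglyMeasurable measurableSet_Ioc) M ?_
  filter_upwards [ae_restrict_mem measurableSet_Ioc] with t ht using hM t (Ioc_subset_Icc_self ht)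

theorem continuousOn_integral_norm_sq (h : IsH1Path T φ dφ) :
    ContinuousOn (fun t => ∫ s in 0..t, ‖dφ s‖ ^ 2) (Icc 0 T) :=
  continuousOn_integral_of_integrableOn_Icc
    ((integrableOn_Icc_iff_integrableOn_Ioc).2 (h.1.integrable_norm_pow two_ne_zero))

theorem norm_sub_sq_le (h : IsH1Path T φ dφ) {t : ℝ} (ht : t ∈ Icc 0 T) :
    ‖φ t - φ 0‖ ^ 2 ≤ t * ∫ s in 0..t, ‖dφ s‖ ^ 2 := by
  have hL2 : MemLp dφ 2 (volume.restrict (Ioc 0 t)) :=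
    h.1.mono_measure (Measure.restrict_mono (Ioc_subset_Ioc_right ht.2) le_rfl)
  have hcs := sq_integral_norm_le_measureReal_mul_integral_norm_sq hL2
  rw [measureReal_restrict_apply_univ, Real.volume_real_Ioc_of_le ht.1, sub_zero] at hcs
  rw [h.2 t ht, add_sub_cancel_left, integral_of_le ht.1, integral_of_le ht.1]
  calc ‖∫ s in Ioc 0 t, dφ s‖ ^ 2 ≤ (∫ s in Ioc 0 t, ‖dφ s‖) ^ 2 :=
        pow_le_pow_left₀ (norm_nonneg _) (MeasureTheory.norm_integral_le_integral_norm _) 2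
    _ ≤ _ := hcs

theorem integral_norm_sq_le (h : IsH1Path T φ dφ) {K : NNReal}
    {b : EuclideanSpace ℝ (Fin n) → EuclideanSpace ℝ (Fin n)} (hb : LipschitzWith K b)
    {τ : ℝ} (hτ : τ ∈ Icc 0 T) :
    ∫ t in 0..τ, ‖dφ t‖ ^ 2 ≤ 4 * action b T φ dφ + 4 * T * ‖b (φ 0)‖ ^ 2
      + 4 * K ^ 2 * T * ∫ t in 0..τ, ∫ s in 0..t, ‖dφ s‖ ^ 2 := by
  set F := fun t => ∫ s in 0..t, ‖dφ s‖ ^ 2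
  have hT : 0 ≤ T := hτ.1.trans hτ.2
  have hresL2 := h.1.sub (h.memLp_comp_s6 hb.continuous)
  have hres : IntervalIntegrable (fun t => ‖dφ t - b (φ t)‖ ^ 2) volume 0 τ :=
    hresL2.intervalIntegrable_norm_sq hτ
  have hFint : IntervalIntegrable F volume 0 τ :=
    (h.continuousOn_integral_norm_sq.mono (Icc_subset_Icc_right hτ.2)).intervalIntegrable_of_Icc
      hτ.1
  have hpt : ∀ t ∈ Icc 0 τ,
      ‖dφ t‖ ^ 2 ≤ 2 * ‖dφ t - b (φ t)‖ ^ 2 + 4 * ‖b (φ 0)‖ ^ 2 + 4 * K ^ 2 * T * F t := by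
    intro t ht
    have htT : t ∈ Icc 0 T := ⟨ht.1, ht.2.trans hτ.2⟩
    have hF0 : 0 ≤ F t := integral_nonneg ht.1 fun _ _ => sq_nonneg _
    have hφt : ‖φ t - φ 0‖ ^ 2 ≤ T * F t :=
      (h.norm_sub_sq_le htT).trans (mul_le_mul_of_nonneg_right htT.2 hF0)
    calc ‖dφ t‖ ^ 2
        ≤ 2 * ‖dφ t - b (φ t)‖ ^ 2 + 4 * ‖b (φ 0)‖ ^ 2 + 4 * K ^ 2 * ‖φ t - φ 0‖ ^ 2 :=
          norm_sq_le_of_lipschitzWith hb _ _ _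
      _ ≤ _ := by rw [mul_assoc (4 * (K : ℝ) ^ 2)]; gcongr
  have hres_le : ∫ t in 0..τ, ‖dφ t - b (φ t)‖ ^ 2 ≤ 2 * action b T φ dφ := by
    rw [action, ← mul_assoc, mul_one_div_cancel two_ne_zero, one_mul]
    exact integral_mono_interval le_rfl hτ.1 hτ.2 (ae_of_all _ fun _ => sq_nonneg _)
      (hresL2.intervalIntegrable_norm_sq ⟨hT, le_rfl⟩)
  calc ∫ t in 0..τ, ‖dφ t‖ ^ 2
      ≤ ∫ t in 0..τ, (2 * ‖dφ t - b (φ t)‖ ^ 2 + 4 * ‖b (φ 0)‖ ^ 2 + 4 * K ^ 2 * T * F t) :=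
        integral_mono_on hτ.1 (h.1.intervalIntegrable_norm_sq hτ)
          (((hres.const_mul 2).add intervalIntegrable_const).add (hFint.const_mul _)) hpt
    _ = 2 * (∫ t in 0..τ, ‖dφ t - b (φ t)‖ ^ 2) + τ * (4 * ‖b (φ 0)‖ ^ 2)
          + 4 * K ^ 2 * T * ∫ t in 0..τ, F t := by
        rw [integral_add ((hres.const_mul 2).add intervalIntegrable_const) (hFint.const_mul _),
          integral_add (hres.const_mul 2) intervalIntegrable_const,
          intervalIntegral.integral_const_mul, intervalIntegral.integral_const,
          intervalIntegral.integral_const_mul, sub_zero, smul_eq_mul]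
    _ ≤ _ := by nlinarith [hτ.2, sq_nonneg ‖b (φ 0)‖]

end IsH1Path

/-- coercivity of `S_T` on paths starting at the origin: there are
constants `C₁, C₂ > 0` depending only on the Lipschitz constant `K` and on `T` such that
`‖φ'‖²_{L²} ≤ C₁‖b(0)‖² + 2C₂ S_T(φ)`, i.e. `S_T(φ) ≥ ‖φ'‖²/(2C₂) − C₁‖b(0)‖²/(2C₂)`. -/
theorem stmt6 {n : ℕ} (K : NNReal) (T : ℝ) (hT : 0 < T) :
    ∃ C₁ C₂ : ℝ, 0 < C₁ ∧ 0 < C₂ ∧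
      ∀ b : EuclideanSpace ℝ (Fin n) → EuclideanSpace ℝ (Fin n), LipschitzWith K b →
        ∀ φ dφ : ℝ → EuclideanSpace ℝ (Fin n), IsH1Path T φ dφ → φ 0 = 0 →
          (∫ t in (0:ℝ)..T, ‖dφ t‖^2) ≤ C₁ * ‖b 0‖^2 + 2 * C₂ * action b T φ dφ ∧
          (1/(2*C₂)) * (∫ t in (0:ℝ)..T, ‖dφ t‖^2) - (C₁/(2*C₂)) * ‖b 0‖^2
            ≤ action b T φ dφ := by
  set B : ℝ := 4 * (K : ℝ) ^ 2 * T
  refine ⟨4 * T * Real.exp (B * T), 2 * Real.exp (B * T), by positivity, by positivity, ?_⟩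
  intro b hb φ dφ h hφ0
  have hgron := le_mul_exp_of_le_add_mul_integral_s6 (by positivity)
    h.continuousOn_integral_norm_sq (fun τ hτ => h.integral_norm_sq_le hb hτ) T ⟨hT.le, le_rfl⟩
  rw [hφ0, sub_zero] at hgron
  have hmain : (∫ t in (0:ℝ)..T, ‖dφ t‖ ^ 2)
      ≤ 4 * T * Real.exp (B * T) * ‖b 0‖ ^ 2 + 2 * (2 * Real.exp (B * T)) * action b T φ dφ :=
    hgron.trans_eq (by ring)
  refine ⟨hmain, ?_⟩
  calc _ = ((∫ t in (0:ℝ)..T, ‖dφ t‖ ^ 2) - 4 * T * Real.exp (B * T) * ‖b 0‖ ^ 2)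
        / (2 * (2 * Real.exp (B * T))) := by ring
    _ ≤ action b T φ dφ := by
      rw [div_le_iff₀ (by positivity)]
      linarith
end
end

section
/- Let b : ℝⁿ → ℝⁿ be Lipschitz with constant K and b(0) = 0. Let φ̃ : [0,L] → ℝⁿ be a curve parametrized by arc length (|φ̃'(α)| = 1 for a.e. α) with φ̃(0) = 0. Then |b(φ̃(α))| ≤ Kα for all α ∈ [0,L], and consequently for every α_y ∈ (0,L] the travel time ∫₀^{α_y} 1/|b(φ̃(α))| dα = +∞. In particular, any path satisfying the zero-Hamiltonian constraint |φ'(t)| = |b(φ(t))| that starts at the equilibrium point 0 requires infinite time to reach any point y ≠ 0, so T* = ∞ for transitions starting at a critical point. -/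
open MeasureTheory Filter intervalIntegral
open scoped RealInnerProductSpace Topology

noncomputable section

/-! Unit speed and `b(0) = 0` give `‖b(φ̃(α))‖ ≤ K‖φ̃(α)‖ ≤ Kα`, so the travel-time integrand
dominates `1/(Kα)`, whose integral diverges logarithmically at `0`. -/

theorem norm_intervalIntegral_le_of_norm_le_ae {E : Type*} [NormedAddCommGroup E]
    [NormedSpace ℝ E] {f : ℝ → E} {C L α : ℝ}
    (hf : ∀ᵐ s ∂(volume.restrict (Set.Ioc 0 L)), ‖f s‖ ≤ C) (hα : α ∈ Set.Icc 0 L) :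
    ‖∫ s in (0:ℝ)..α, f s‖ ≤ C * α := by
  have hle : ∀ᵐ s, s ∈ Set.uIoc 0 α → ‖f s‖ ≤ C := by
    filter_upwards [(ae_restrict_iff' measurableSet_Ioc).1 hf] with s hs hmem
    rw [Set.uIoc_of_le hα.1] at hmem
    exact hs ⟨hmem.1, hmem.2.trans hα.2⟩
  simpa [abs_of_nonneg hα.1] using norm_integral_le_of_norm_le_const_ae hle

theorem lintegral_Ioc_ofReal_inv_eq_top {a : ℝ} (ha : 0 < a) :
    ∫⁻ x in Set.Ioc 0 a, ENNReal.ofReal x⁻¹ = ⊤ := by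
  by_contra hfin
  have hint : IntegrableOn (·⁻¹) (Set.Ioc 0 a) :=
    (lintegral_ofReal_ne_top_iff_integrable measurable_inv.aestronglyMeasurable
      (ae_restrict_of_forall_mem measurableSet_Ioc fun x hx => inv_nonneg.2 hx.1.le)).1 hfin
  simpa [ha.ne] using (intervalIntegrable_iff_integrableOn_Ioc_of_le ha.le).2 hint

theorem lintegral_Ioc_one_div_eq_top_of_le_mul {f : ℝ → ℝ} {C a : ℝ} (ha : 0 < a)
    (hf : ∀ x ∈ Set.Ioc 0 a, f x ≤ C * x) :
    ∫⁻ x in Set.Ioc 0 a, 1 / ENNReal.ofReal (f x) = ⊤ := by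
  have hbound : ∀ x ∈ Set.Ioc 0 a,
      (ENNReal.ofReal C)⁻¹ * ENNReal.ofReal x⁻¹ ≤ 1 / ENNReal.ofReal (f x) := fun x hx => by
    rw [one_div, ENNReal.ofReal_inv_of_pos hx.1, ← ENNReal.mul_inv (.inr ENNReal.ofReal_ne_top)
      (.inl ENNReal.ofReal_ne_top), ← ENNReal.ofReal_mul' hx.1.le]
    exact ENNReal.inv_le_inv.2 (ENNReal.ofReal_le_ofReal (hf x hx))
  refine eq_top_iff.2 (le_trans ?_ (setLIntegral_mono' measurableSet_Ioc hbound))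
  rw [lintegral_const_mul _ measurable_inv.ennreal_ofReal, lintegral_Ioc_ofReal_inv_eq_top ha,
    ENNReal.mul_top (ENNReal.inv_ne_zero.2 ENNReal.ofReal_ne_top)]

theorem stmt17_general {n : ℕ} (b : EuclideanSpace ℝ (Fin n) → EuclideanSpace ℝ (Fin n))
    (K : NNReal) (hb : LipschitzWith K b) (hb0 : b 0 = 0)
    (L : ℝ)
    (φ dφ : ℝ → EuclideanSpace ℝ (Fin n))
    -- arc-length parametrization: `‖φ̃'(α)‖ = 1` a.e.
    (hunit : ∀ᵐ α ∂(MeasureTheory.volume.restrict (Set.Ioc (0:ℝ) L)), ‖dφ α‖ = 1)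
    -- absolute continuity
    (hAC : ∀ α ∈ Set.Icc (0:ℝ) L, φ α = φ 0 + ∫ s in (0:ℝ)..α, dφ s)
    (h0 : φ 0 = 0) :
    (∀ α ∈ Set.Icc (0:ℝ) L, ‖b (φ α)‖ ≤ (K:ℝ) * α) ∧
    (∀ αy : ℝ, 0 < αy → αy ≤ L →
      ∫⁻ α in Set.Ioc (0:ℝ) αy, (1 / ENNReal.ofReal ‖b (φ α)‖) = ⊤) := by
  have hφ : ∀ α ∈ Set.Icc 0 L, ‖φ α‖ ≤ α := fun α hα => by
    simpa [hAC α hα, h0] using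
      norm_intervalIntegral_le_of_norm_le_ae (hunit.mono fun _ h => h.le) hα
  have hbφ : ∀ α ∈ Set.Icc 0 L, ‖b (φ α)‖ ≤ K * α := fun α hα =>
    (hb.norm_le_mul hb0 _).trans (mul_le_mul_of_nonneg_left (hφ α hα) K.coe_nonneg)
  exact ⟨hbφ, fun αy hαy hαyL => lintegral_Ioc_one_div_eq_top_of_le_mul hαy
    fun α hα => hbφ α ⟨hα.1.le, hα.2.trans hαyL⟩⟩

/-- along an arc-length parametrized curve `φ̃` starting at the equilibrium
`0` of a `K`-Lipschitz field `b` (with `b(0) = 0`), one has `‖b(φ̃(α))‖ ≤ Kα`, and the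
travel time `∫₀^{α_y} dα/‖b(φ̃(α))‖` is infinite for every `α_y > 0`; hence any path
satisfying the zero-Hamiltonian constraint needs infinite time to leave a critical point. -/
theorem stmt17 {n : ℕ} (b : EuclideanSpace ℝ (Fin n) → EuclideanSpace ℝ (Fin n))
    (K : NNReal) (hb : LipschitzWith K b) (hb0 : b 0 = 0)
    (L : ℝ) (hL : 0 < L)
    (φ dφ : ℝ → EuclideanSpace ℝ (Fin n))
    (hmeas : MeasureTheory.AEStronglyMeasurable dφ
      (MeasureTheory.volume.restrict (Set.Ioc (0:ℝ) L)))
    -- arc-length parametrization: `‖φ̃'(α)‖ = 1` a.e.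
    (hunit : ∀ᵐ α ∂(MeasureTheory.volume.restrict (Set.Ioc (0:ℝ) L)), ‖dφ α‖ = 1)
    -- absolute continuity
    (hAC : ∀ α ∈ Set.Icc (0:ℝ) L, φ α = φ 0 + ∫ s in (0:ℝ)..α, dφ s)
    (h0 : φ 0 = 0) :
    (∀ α ∈ Set.Icc (0:ℝ) L, ‖b (φ α)‖ ≤ (K:ℝ) * α) ∧
    (∀ αy : ℝ, 0 < αy → αy ≤ L →
      ∫⁻ α in Set.Ioc (0:ℝ) αy, (1 / ENNReal.ofReal ‖b (φ α)‖) = ⊤) :=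
  stmt17_general b K hb hb0 L φ dφ hunit hAC h0
end
end
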